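/- For the complete bipartite graph K_{m,n}, the GBS polynomial is GBS_{K_{m,n}}(x) = Σ_{r=0}^{min(m,n)} (−1)^r · C(m,r) · C(n,r) · (r!)² · x^{m+n−2r}. -/

import Mathlib

open Finset Polynomial

/-- The hafnian of an `n × n` matrix: `(1/((n/2)! 2^(n/2))) ∑_{σ} ∏_j A_{σ(2j), σ(2j+1)}`,
taken to be `0` when `n` is odd and `1` for the empty matrix. -/
noncomputable def haf {F : Type*} [Field F] {n : ℕ} (A : Matrix (Fin n) (Fin n) F) : F :=
  if h : 2 ∣ n then
    (((n / 2).factorial * 2 ^ (n / 2) : ℕ) : F)⁻¹ *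
      ∑ σ : Equiv.Perm (Fin n), ∏ j : Fin (n / 2),
        A (σ ⟨2 * j.1, by have h1 := Nat.div_mul_cancel h; have h2 := j.isLt; omega⟩)
          (σ ⟨2 * j.1 + 1, by have h1 := Nat.div_mul_cancel h; have h2 := j.isLt; omega⟩)
  else 0

/-- The principal submatrix of `A` indexed by the subset `S` of the rows/columns. -/
def subm {F : Type*} {M : ℕ} (A : Matrix (Fin M) (Fin M) F) (S : Finset (Fin M)) :
    Matrix (Fin S.card) (Fin S.card) F :=
  fun i j => A (S.orderEmbOfFin rfl i) (S.orderEmbOfFin rfl j)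

/-- The GBS polynomial `∑_{S ⊆ V} (-1)^{|S|/2} haf(A_S)² x^{M-|S|}`. -/
noncomputable def GBS {F : Type*} [Field F] {M : ℕ} (A : Matrix (Fin M) (Fin M) F) :
    Polynomial F :=
  ∑ S : Finset (Fin M),
    Polynomial.C ((-1 : F) ^ (S.card / 2) * (haf (subm A S)) ^ 2) * Polynomial.X ^ (M - S.card)

/-- The signless GBS polynomial `∑_{S ⊆ V} haf(A_S)² x^{M-|S|}`. -/
noncomputable def GBSplus {F : Type*} [Field F] {M : ℕ} (A : Matrix (Fin M) (Fin M) F) :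
    Polynomial F :=
  ∑ S : Finset (Fin M), Polynomial.C ((haf (subm A S)) ^ 2) * Polynomial.X ^ (M - S.card)

/-- The signless matching polynomial `μ⁺(A, z) = ∑_{T} haf(A_{T,T}) z^{M-|T|}`. -/
noncomputable def muPlus {F : Type*} [Field F] {M : ℕ} (A : Matrix (Fin M) (Fin M) F) :
    Polynomial F :=
  ∑ S : Finset (Fin M), Polynomial.C (haf (subm A S)) * Polynomial.X ^ (M - S.card)

/-- The (signed) matching polynomial `μ(A, z) = ∑_{T} (-1)^{|T|/2} haf(A_{T,T}) z^{M-|T|}`. -/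
noncomputable def matchPoly {F : Type*} [Field F] {M : ℕ} (A : Matrix (Fin M) (Fin M) F) :
    Polynomial F :=
  ∑ S : Finset (Fin M),
    Polynomial.C ((-1 : F) ^ (S.card / 2) * haf (subm A S)) * Polynomial.X ^ (M - S.card)

/-- The adjacency matrix `[[A, xI],[xI, A]]` of the prism `G □ P₂(x)` over the graph
with adjacency matrix `A`. -/
noncomputable def prism {F : Type*} [Field F] {M : ℕ} (A : Matrix (Fin M) (Fin M) F) (x : F) :
    Matrix (Fin (M + M)) (Fin (M + M)) F :=
  Matrix.submatrix (Matrix.fromBlocks A (x • 1) (x • 1) A) finSumFinEquiv.symm finSumFinEquiv.symm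

/-- The adjacency matrix `A₁ ⊕ A₂` of the disjoint union of two graphs. -/
def dsum {F : Type*} [Zero F] {M N : ℕ} (A : Matrix (Fin M) (Fin M) F)
    (B : Matrix (Fin N) (Fin N) F) : Matrix (Fin (M + N)) (Fin (M + N)) F :=
  Matrix.submatrix (Matrix.fromBlocks A 0 0 B) finSumFinEquiv.symm finSumFinEquiv.symm

/-- The adjacency matrix of the complete bipartite graph `K_{m,n}` on `Fin (m+n)`,
with the first `m` vertices on one side. -/
def bipAdj (m n : ℕ) : Matrix (Fin (m + n)) (Fin (m + n)) ℝ :=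
  fun i j => if (i.1 < m ∧ ¬ j.1 < m) ∨ (¬ i.1 < m ∧ j.1 < m) then 1 else 0

-- auxiliary development
def bpat (a c : ℕ) : Matrix (Fin c) (Fin c) ℝ :=
  fun i j => if (i.1 < a ∧ ¬ j.1 < a) ∨ (¬ i.1 < a ∧ j.1 < a) then 1 else 0

lemma bipAdj_eq_bpat (m n : ℕ) : bipAdj m n = bpat m (m + n) := rfl

lemma card_filter_lt (c t : ℕ) :
    ((univ : Finset (Fin c)).filter (fun j => j.1 < t)).card = min t c := by
  have h : ((range c).filter (fun j => j < t)) = range (min t c) := by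
    ext x; simp only [Finset.mem_filter, Finset.mem_range]; omega
  rw [Finset.card_filter, Fin.sum_univ_eq_sum_range (fun j => if j < t then 1 else 0) c,
    ← Finset.card_filter, h, Finset.card_range]

lemma dcl_mem_iff {c : ℕ} {D : Finset (Fin c)}
    (hD : ∀ i j : Fin c, i ≤ j → j ∈ D → i ∈ D) (i : Fin c) : i ∈ D ↔ i.1 < D.card := by
  constructor
  · intro hi
    have hsub : (univ : Finset (Fin c)).filter (fun j => j.1 < i.1 + 1) ⊆ D := by
      intro j hj
      simp only [Finset.mem_filter] at hj
      exact hD j i (by rw [Fin.le_def]; omega) hi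
    have h1 := Finset.card_le_card hsub
    rw [card_filter_lt] at h1
    have := i.2
    omega
  · intro hi
    by_contra hmem
    have hsub : D ⊆ (univ : Finset (Fin c)).filter (fun j => j.1 < i.1) := by
      intro j hj
      simp only [Finset.mem_filter, Finset.mem_univ, true_and]
      by_contra hji
      exact hmem (hD i j (by rw [Fin.le_def]; omega) hj)
    have h1 := Finset.card_le_card hsub
    rw [card_filter_lt] at h1
    omega

lemma subm_bipAdj (m n : ℕ) (S : Finset (Fin (m + n))) :
    subm (bipAdj m n) S = bpat ((S.filter (fun x => x.1 < m)).card) S.card := by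
  classical
  set e := S.orderEmbOfFin rfl with he
  set D : Finset (Fin S.card) := univ.filter (fun i => (e i).1 < m) with hDdef
  have hD : ∀ i j : Fin S.card, i ≤ j → j ∈ D → i ∈ D := by
    intro i j hij hj
    simp only [hDdef, Finset.mem_filter, Finset.mem_univ, true_and] at hj ⊢
    have := e.monotone hij
    rw [Fin.le_def] at this
    omega
  have hcard : D.card = (S.filter (fun x => x.1 < m)).card := by
    apply Finset.card_bij (fun i _ => e i)
    · intro i hi
      simp only [hDdef, Finset.mem_filter, Finset.mem_univ, true_and] at hi
      simp only [Finset.mem_filter]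
      exact ⟨S.orderEmbOfFin_mem rfl i, hi⟩
    · intro i _ j _ hij
      exact e.injective hij
    · intro x hx
      simp only [Finset.mem_filter] at hx
      have : x ∈ Set.range e := by rw [he, Finset.range_orderEmbOfFin]; exact hx.1
      obtain ⟨i, hi⟩ := this
      refine ⟨i, ?_, hi⟩
      simp only [hDdef, Finset.mem_filter, Finset.mem_univ, true_and, hi]
      exact hx.2
  have key : ∀ i : Fin S.card, ((e i).1 < m ↔ i.1 < (S.filter (fun x => x.1 < m)).card) := by
    intro i
    rw [← hcard, ← dcl_mem_iff hD i]
    simp [hDdef]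
  funext i j
  simp only [subm, bipAdj, bpat, ← he]
  rw [if_congr (by rw [key i, key j]) rfl rfl]

set_option maxHeartbeats 1000000 in
lemma perm_balance {a b : ℕ} (hdvd : 2 ∣ a + b) (σ : Equiv.Perm (Fin (a + b)))
    (h : ∀ j : Fin ((a + b) / 2),
      ((σ ⟨2 * j.1, by have := j.2; omega⟩).1 < a ∧
          ¬ (σ ⟨2 * j.1 + 1, by have := j.2; omega⟩).1 < a) ∨
        (¬ (σ ⟨2 * j.1, by have := j.2; omega⟩).1 < a ∧
          (σ ⟨2 * j.1 + 1, by have := j.2; omega⟩).1 < a)) :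
    a = b := by
  classical
  have h1 : ((univ : Finset (Fin (a + b))).filter (fun v => v.1 < a)).card = a := by
    rw [card_filter_lt]; omega
  have h2 : ((univ : Finset (Fin (a + b))).filter (fun v => v.1 < a)).card
      = ∑ i : Fin (a + b), (if (σ i).1 < a then 1 else 0) := by
    rw [Finset.card_filter]
    exact (Equiv.sum_comp σ (fun v => if v.1 < a then 1 else 0)).symm
  have hk : (a + b) / 2 * 2 = a + b := Nat.div_mul_cancel hdvd
  set E : Fin ((a + b) / 2) × Fin 2 ≃ Fin (a + b) := finProdFinEquiv.trans (finCongr hk) with hE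
  have h3 : ∑ p : Fin ((a + b) / 2) × Fin 2, (if (σ (E p)).1 < a then (1:ℕ) else 0)
      = ∑ i : Fin (a + b), (if (σ i).1 < a then 1 else 0) :=
    Equiv.sum_comp E (fun i => if (σ i).1 < a then 1 else 0)
  have h4 : ∀ j : Fin ((a + b) / 2),
      (∑ t : Fin 2, if (σ (E (j, t))).1 < a then (1:ℕ) else 0) = 1 := by
    intro j
    have e0 : E (j, (0 : Fin 2)) = (⟨2 * j.1, by have := j.2; omega⟩ : Fin (a+b)) := by
      apply Fin.ext; simp [hE, finCongr_apply]
    have e1 : E (j, (1 : Fin 2)) = (⟨2 * j.1 + 1, by have := j.2; omega⟩ : Fin (a+b)) := by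
      apply Fin.ext; simp [hE, finCongr_apply]; omega
    rw [Fin.sum_univ_two, e0, e1]
    rcases h j with ⟨ha, hb⟩ | ⟨ha, hb⟩ <;> simp [ha, hb]
  have h5 : a = (a + b) / 2 := by
    have h6 := h1.symm.trans h2
    rw [← h3, Fintype.sum_prod_type] at h6
    simp only [h4] at h6
    simpa using h6
  omega

def ev {r : ℕ} (j : Fin r) : Fin (r + r) := ⟨2 * j.1, by have := j.2; omega⟩
def od {r : ℕ} (j : Fin r) : Fin (r + r) := ⟨2 * j.1 + 1, by have := j.2; omega⟩
def lft {r : ℕ} (u : Fin r) : Fin (r + r) := ⟨u.1, by have := u.2; omega⟩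
def rgt {r : ℕ} (u : Fin r) : Fin (r + r) := ⟨r + u.1, by have := u.2; omega⟩

@[simp] lemma ev_val {r : ℕ} (j : Fin r) : (ev j).1 = 2 * j.1 := rfl
@[simp] lemma od_val {r : ℕ} (j : Fin r) : (od j).1 = 2 * j.1 + 1 := rfl
@[simp] lemma lft_val {r : ℕ} (u : Fin r) : (lft u).1 = u.1 := rfl
@[simp] lemma rgt_val {r : ℕ} (u : Fin r) : (rgt u).1 = r + u.1 := rfl

lemma ev_or_od {r : ℕ} (i : Fin (r + r)) : (∃ j, i = ev j) ∨ (∃ j, i = od j) := by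
  rcases Nat.mod_two_eq_zero_or_one i.1 with h | h
  · exact Or.inl ⟨⟨i.1 / 2, by have := i.2; omega⟩, Fin.ext (by simp [ev]; omega)⟩
  · exact Or.inr ⟨⟨i.1 / 2, by have := i.2; omega⟩, Fin.ext (by simp [od]; omega)⟩

lemma lft_or_rgt {r : ℕ} (v : Fin (r + r)) : (∃ u, v = lft u) ∨ (∃ u, v = rgt u) := by
  by_cases h : v.1 < r
  · exact Or.inl ⟨⟨v.1, h⟩, Fin.ext rfl⟩
  · exact Or.inr ⟨⟨v.1 - r, by have := v.2; omega⟩, Fin.ext (by simp [rgt]; omega)⟩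

def Qr (r : ℕ) (σ : Equiv.Perm (Fin (r + r))) : Prop :=
  ∀ j : Fin r,
    ((σ (ev j)).1 < r ∧ ¬ (σ (od j)).1 < r) ∨ (¬ (σ (ev j)).1 < r ∧ (σ (od j)).1 < r)

instance QrDec (r : ℕ) : DecidablePred (Qr r) := fun _ => by unfold Qr; infer_instance

abbrev PD (r : ℕ) := (Fin r → Bool) × Equiv.Perm (Fin r) × Equiv.Perm (Fin r)

def fwd (r : ℕ) (d : PD r) (i : Fin (r + r)) : Fin (r + r) :=
  if d.1 ⟨i.1 / 2, by have := i.2; omega⟩ = decide (i.1 % 2 = 1)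
  then lft (d.2.1 ⟨i.1 / 2, by have := i.2; omega⟩)
  else rgt (d.2.2 ⟨i.1 / 2, by have := i.2; omega⟩)

def bwd (r : ℕ) (d : PD r) (v : Fin (r + r)) : Fin (r + r) :=
  if h : v.1 < r then
    (fun u => if d.1 u then od u else ev u) (d.2.1.symm ⟨v.1, h⟩)
  else
    (fun w => if d.1 w then ev w else od w) (d.2.2.symm ⟨v.1 - r, by have := v.2; omega⟩)

lemma fwd_ev {r : ℕ} (d : PD r) (j : Fin r) :
    fwd r d (ev j) = if d.1 j then rgt (d.2.2 j) else lft (d.2.1 j) := by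
  unfold fwd
  have h1 : ((ev j).1) / 2 = j.1 := by simp only [ev_val]; omega
  have h2 : ((ev j).1) % 2 = 0 := by simp only [ev_val]; omega
  simp only [h1, h2, Fin.eta]
  by_cases hε : d.1 j <;> simp [hε]

lemma fwd_od {r : ℕ} (d : PD r) (j : Fin r) :
    fwd r d (od j) = if d.1 j then lft (d.2.1 j) else rgt (d.2.2 j) := by
  unfold fwd
  have h1 : ((od j).1) / 2 = j.1 := by simp only [od_val]; omega
  have h2 : ((od j).1) % 2 = 1 := by simp only [od_val]; omega
  simp only [h1, h2, Fin.eta]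
  by_cases hε : d.1 j <;> simp [hε]

lemma bwd_lft {r : ℕ} (d : PD r) (u : Fin r) :
    bwd r d (lft u) = if d.1 (d.2.1.symm u) then od (d.2.1.symm u) else ev (d.2.1.symm u) := by
  unfold bwd
  rw [dif_pos (show (lft u).1 < r from u.2)]
  simp [Fin.eta]
  rfl

lemma bwd_rgt {r : ℕ} (d : PD r) (u : Fin r) :
    bwd r d (rgt u) = if d.1 (d.2.2.symm u) then ev (d.2.2.symm u) else od (d.2.2.symm u) := by
  unfold bwd
  rw [dif_neg (by simp)]
  have h1 : (rgt u).1 - r = u.1 := by simp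
  simp only [h1, Fin.eta]

def mkPerm (r : ℕ) (d : PD r) : Equiv.Perm (Fin (r + r)) where
  toFun := fwd r d
  invFun := bwd r d
  left_inv := by
    intro i
    rcases ev_or_od i with ⟨j, rfl⟩ | ⟨j, rfl⟩
    · rw [fwd_ev]
      by_cases hε : d.1 j
      · rw [if_pos hε, bwd_rgt]
        simp [hε]
      · rw [if_neg hε, bwd_lft]
        simp [hε]
    · rw [fwd_od]
      by_cases hε : d.1 j
      · rw [if_pos hε, bwd_lft]
        simp [hε]
      · rw [if_neg hε, bwd_rgt]
        simp [hε]
  right_inv := by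
    intro v
    rcases lft_or_rgt v with ⟨u, rfl⟩ | ⟨u, rfl⟩
    · rw [bwd_lft]
      by_cases hε : d.1 (d.2.1.symm u)
      · rw [if_pos hε, fwd_od, if_pos hε]
        simp
      · rw [if_neg hε, fwd_ev, if_neg hε]
        simp
    · rw [bwd_rgt]
      by_cases hε : d.1 (d.2.2.symm u)
      · rw [if_pos hε, fwd_ev, if_pos hε]
        simp
      · rw [if_neg hε, fwd_od, if_neg hε]
        simp

lemma mkPerm_ev {r : ℕ} (d : PD r) (j : Fin r) :
    mkPerm r d (ev j) = if d.1 j then rgt (d.2.2 j) else lft (d.2.1 j) := fwd_ev d j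

lemma mkPerm_od {r : ℕ} (d : PD r) (j : Fin r) :
    mkPerm r d (od j) = if d.1 j then lft (d.2.1 j) else rgt (d.2.2 j) := fwd_od d j

lemma Qr_mkPerm {r : ℕ} (d : PD r) : Qr r (mkPerm r d) := by
  intro j
  rw [mkPerm_ev, mkPerm_od]
  by_cases hε : d.1 j
  · rw [if_pos hε, if_pos hε]
    right
    constructor
    · simp
    · simp [(d.2.1 j).2]
  · rw [if_neg hε, if_neg hε]
    left
    constructor
    · simp [(d.2.1 j).2]
    · simp

lemma mkPerm_inj {r : ℕ} {d d' : PD r} (h : mkPerm r d = mkPerm r d') : d = d' := by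
  have hfun : ∀ i, mkPerm r d i = mkPerm r d' i := fun i => by rw [h]
  have hε : d.1 = d'.1 := by
    funext j
    have := hfun (ev j)
    rw [mkPerm_ev, mkPerm_ev] at this
    by_cases h1 : d.1 j <;> by_cases h2 : d'.1 j <;> simp [h1, h2] at this ⊢
    · have := congrArg Fin.val this
      simp at this
      have := (d'.2.1 j).2
      omega
    · have := congrArg Fin.val this
      simp at this
      have := (d.2.1 j).2
      omega
  have hπ : d.2.1 = d'.2.1 := by
    apply Equiv.ext
    intro j
    by_cases h1 : d.1 j
    · have := hfun (od j)
      rw [mkPerm_od, mkPerm_od, if_pos h1, if_pos (hε ▸ h1)] at this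
      exact Fin.ext (by simpa using congrArg Fin.val this)
    · have := hfun (ev j)
      rw [mkPerm_ev, mkPerm_ev, if_neg h1, if_neg (hε ▸ h1)] at this
      exact Fin.ext (by simpa using congrArg Fin.val this)
  have hρ : d.2.2 = d'.2.2 := by
    apply Equiv.ext
    intro j
    by_cases h1 : d.1 j
    · have := hfun (ev j)
      rw [mkPerm_ev, mkPerm_ev, if_pos h1, if_pos (hε ▸ h1)] at this
      have := congrArg Fin.val this
      simp at this
      exact Fin.ext (by omega)
    · have := hfun (od j)
      rw [mkPerm_od, mkPerm_od, if_neg h1, if_neg (hε ▸ h1)] at this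
      have := congrArg Fin.val this
      simp at this
      exact Fin.ext (by omega)
  exact Prod.ext hε (Prod.ext hπ hρ)

lemma mkPerm_surj {r : ℕ} (σ : Equiv.Perm (Fin (r + r))) (hQ : Qr r σ) :
    ∃ d : PD r, mkPerm r d = σ := by
  classical
  set πf : Fin r → Fin r := fun j =>
    if h : (σ (ev j)).1 < r then ⟨(σ (ev j)).1, h⟩
    else ⟨(σ (od j)).1, by rcases hQ j with ⟨h1, h2⟩ | ⟨h1, h2⟩; exacts [absurd h1 h, h2]⟩
    with hπf
  set ρf : Fin r → Fin r := fun j =>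
    if (σ (ev j)).1 < r then ⟨(σ (od j)).1 - r, by have := (σ (od j)).2; omega⟩
    else ⟨(σ (ev j)).1 - r, by have := (σ (ev j)).2; omega⟩
    with hρf
  have key : ∀ x y : Fin (r + r), (σ x).1 = (σ y).1 → x = y := by
    intro x y hxy
    exact σ.injective (Fin.ext hxy)
  have hπinj : Function.Injective πf := by
    intro j j' hjj'
    rw [hπf] at hjj'
    simp only at hjj'
    split_ifs at hjj' with h1 h2 h2 <;>
    · have hv := congrArg Fin.val hjj'
      have e := key _ _ hv
      have hval := congrArg Fin.val e
      simp only [ev_val, od_val] at hval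
      exact Fin.ext (by omega)
  have hρinj : Function.Injective ρf := by
    intro j j' hjj'
    rw [hρf] at hjj'
    simp only at hjj'
    split_ifs at hjj' with h1 h2 h2
    · have hr1 : r ≤ (σ (od j)).1 := by
        rcases hQ j with ⟨ha, hb⟩ | ⟨ha, hb⟩; exacts [by omega, absurd h1 ha]
      have hr2 : r ≤ (σ (od j')).1 := by
        rcases hQ j' with ⟨ha, hb⟩ | ⟨ha, hb⟩; exacts [by omega, absurd h2 ha]
      have hv := congrArg Fin.val hjj'
      simp only at hv
      have e := key (od j) (od j') (by omega)
      have hval := congrArg Fin.val e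
      simp only [od_val] at hval
      exact Fin.ext (by omega)
    · have hr1 : r ≤ (σ (od j)).1 := by
        rcases hQ j with ⟨ha, hb⟩ | ⟨ha, hb⟩; exacts [by omega, absurd h1 ha]
      have hr2 : r ≤ (σ (ev j')).1 := by omega
      have hv := congrArg Fin.val hjj'
      simp only at hv
      have e := key (od j) (ev j') (by omega)
      have hval := congrArg Fin.val e
      simp only [od_val, ev_val] at hval
      exact Fin.ext (by omega)
    · have hr1 : r ≤ (σ (ev j)).1 := by omega
      have hr2 : r ≤ (σ (od j')).1 := by
        rcases hQ j' with ⟨ha, hb⟩ | ⟨ha, hb⟩; exacts [by omega, absurd h2 ha]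
      have hv := congrArg Fin.val hjj'
      simp only at hv
      have e := key (ev j) (od j') (by omega)
      have hval := congrArg Fin.val e
      simp only [od_val, ev_val] at hval
      exact Fin.ext (by omega)
    · have hr1 : r ≤ (σ (ev j)).1 := by omega
      have hr2 : r ≤ (σ (ev j')).1 := by omega
      have hv := congrArg Fin.val hjj'
      simp only at hv
      have e := key (ev j) (ev j') (by omega)
      have hval := congrArg Fin.val e
      simp only [ev_val] at hval
      exact Fin.ext (by omega)
  refine ⟨(fun j => decide (¬ (σ (ev j)).1 < r),
    Equiv.ofBijective πf (Finite.injective_iff_bijective.mp hπinj),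
    Equiv.ofBijective ρf (Finite.injective_iff_bijective.mp hρinj)), ?_⟩
  apply Equiv.ext
  intro i
  rcases ev_or_od i with ⟨j, rfl⟩ | ⟨j, rfl⟩
  · rw [mkPerm_ev]
    by_cases h : (σ (ev j)).1 < r
    · rw [if_neg (by simp [h])]
      apply Fin.ext
      simp only [lft_val, Equiv.ofBijective_apply, hπf]
      rw [dif_pos h]
    · rw [if_pos (by simp [h])]
      apply Fin.ext
      simp only [rgt_val, Equiv.ofBijective_apply, hρf]
      rw [if_neg h]
      have := (σ (ev j)).2
      simp only
      omega
  · rw [mkPerm_od]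
    by_cases h : (σ (ev j)).1 < r
    · have hr : r ≤ (σ (od j)).1 := by
        rcases hQ j with ⟨ha, hb⟩ | ⟨ha, hb⟩; exacts [by omega, absurd h ha]
      rw [if_neg (by simp [h])]
      apply Fin.ext
      simp only [rgt_val, Equiv.ofBijective_apply, hρf]
      rw [if_pos h]
      simp only
      omega
    · have hl : (σ (od j)).1 < r := by
        rcases hQ j with ⟨ha, hb⟩ | ⟨ha, hb⟩; exacts [absurd ha h, hb]
      rw [if_pos (by simp [h])]
      apply Fin.ext
      simp only [lft_val, Equiv.ofBijective_apply, hπf]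
      rw [dif_neg h]

lemma count_Qr (r : ℕ) :
    ((univ : Finset (Equiv.Perm (Fin (r + r)))).filter (Qr r)).card
      = 2 ^ r * (r.factorial * r.factorial) := by
  classical
  have h1 : ((univ : Finset (PD r)).card)
      = ((univ : Finset (Equiv.Perm (Fin (r + r)))).filter (Qr r)).card := by
    apply Finset.card_bij (fun d _ => mkPerm r d)
    · intro d _
      simp only [Finset.mem_filter, Finset.mem_univ, true_and]
      exact Qr_mkPerm d
    · intro d _ d' _ h
      exact mkPerm_inj h
    · intro σ hσ
      rw [Finset.mem_filter] at hσ
      obtain ⟨d, hd⟩ := mkPerm_surj σ hσ.2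
      exact ⟨d, Finset.mem_univ d, hd⟩
  rw [← h1, Finset.card_univ]
  simp [Fintype.card_perm]


lemma haf_bpat_eq (r : ℕ) : haf (bpat r (r + r)) = (r.factorial : ℝ) := by
  classical
  have hdvd : 2 ∣ (r + r) := ⟨r, by omega⟩
  rw [haf, dif_pos hdvd]
  have hsum : (∑ σ : Equiv.Perm (Fin (r + r)), ∏ j : Fin ((r + r) / 2),
      bpat r (r + r) (σ ⟨2 * j.1, by have := j.2; omega⟩)
        (σ ⟨2 * j.1 + 1, by have := j.2; omega⟩))
      = ((2 ^ r * (r.factorial * r.factorial) : ℕ) : ℝ) := by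
    have hterm : ∀ σ : Equiv.Perm (Fin (r + r)),
        (∏ j : Fin ((r + r) / 2),
          bpat r (r + r) (σ ⟨2 * j.1, by have := j.2; omega⟩)
            (σ ⟨2 * j.1 + 1, by have := j.2; omega⟩))
        = if Qr r σ then (1:ℝ) else 0 := by
      intro σ
      simp only [bpat]
      rw [Fintype.prod_boole]
      congr 1
      apply propext
      constructor
      · intro hh j
        have := hh ⟨j.1, by have := j.2; omega⟩
        exact this
      · intro hh j
        have := hh ⟨j.1, by have := j.2; omega⟩
        exact this
    rw [Finset.sum_congr rfl (fun σ _ => hterm σ), Finset.sum_boole, count_Qr]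
  rw [hsum]
  have h2 : (r + r) / 2 = r := by omega
  rw [h2]
  push_cast
  have hfac : (r.factorial : ℝ) ≠ 0 := Nat.cast_ne_zero.mpr (Nat.factorial_ne_zero r)
  have hpow : ((2:ℝ) ^ r) ≠ 0 := pow_ne_zero r two_ne_zero
  field_simp

lemma haf_bpat (a b : ℕ) : haf (bpat a (a + b)) = if a = b then (a.factorial : ℝ) else 0 := by
  classical
  by_cases hab : a = b
  · subst hab; rw [if_pos rfl]; exact haf_bpat_eq a
  · rw [if_neg hab]
    by_cases hdvd : 2 ∣ (a + b)
    · rw [haf, dif_pos hdvd]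
      have hsum : (∑ σ : Equiv.Perm (Fin (a + b)), ∏ j : Fin ((a + b) / 2),
          bpat a (a + b) (σ ⟨2 * j.1, by have := j.2; omega⟩)
            (σ ⟨2 * j.1 + 1, by have := j.2; omega⟩)) = (0:ℝ) := by
        apply Finset.sum_eq_zero
        intro σ _
        simp only [bpat]
        rw [Fintype.prod_boole, if_neg]
        intro hQ
        exact hab (perm_balance hdvd σ hQ)
      rw [hsum, mul_zero]
    · rw [haf, dif_neg hdvd]

lemma haf_bpat' (a c : ℕ) (h : a ≤ c) :
    haf (bpat a c) = if 2 * a = c then (a.factorial : ℝ) else 0 := by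
  obtain ⟨b, rfl⟩ : ∃ b, c = a + b := ⟨c - a, by omega⟩
  rw [haf_bpat a b]
  by_cases hab : a = b
  · subst hab; rw [if_pos rfl, if_pos (by omega)]
  · rw [if_neg hab, if_neg (by omega)]

def joinSets (m n : ℕ) (p : Finset (Fin m) × Finset (Fin n)) : Finset (Fin (m + n)) :=
  p.1.map (Fin.castAddEmb n) ∪ p.2.map (Fin.natAddEmb m)

lemma joinSets_filter_lt (m n : ℕ) (p : Finset (Fin m) × Finset (Fin n)) :
    (joinSets m n p).filter (fun x => x.1 < m) = p.1.map (Fin.castAddEmb n) := by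
  ext x
  simp only [joinSets, Finset.mem_filter, Finset.mem_union, Finset.mem_map]
  constructor
  · rintro ⟨⟨a, ha, rfl⟩ | ⟨a, ha, rfl⟩, hlt⟩
    · exact ⟨a, ha, rfl⟩
    · exfalso
      simp [Fin.natAddEmb] at hlt
      exact absurd hlt (Nat.not_lt.mpr (Nat.le_add_right _ _))
  · rintro ⟨a, ha, rfl⟩
    refine ⟨Or.inl ⟨a, ha, rfl⟩, ?_⟩
    simp [Fin.castAddEmb, Fin.castLEEmb]
lemma joinSets_filter_ge (m n : ℕ) (p : Finset (Fin m) × Finset (Fin n)) :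
    (joinSets m n p).filter (fun x => ¬ x.1 < m) = p.2.map (Fin.natAddEmb m) := by
  ext x
  simp only [joinSets, Finset.mem_filter, Finset.mem_union, Finset.mem_map]
  constructor
  · rintro ⟨⟨a, ha, rfl⟩ | ⟨a, ha, rfl⟩, hlt⟩
    · exfalso
      apply hlt
      simp [Fin.castAddEmb, Fin.castLEEmb]
    · exact ⟨a, ha, rfl⟩
  · rintro ⟨a, ha, rfl⟩
    refine ⟨Or.inr ⟨a, ha, rfl⟩, ?_⟩
    simp [Fin.natAddEmb]
    exact Nat.le_add_right _ _

lemma joinSets_card (m n : ℕ) (p : Finset (Fin m) × Finset (Fin n)) :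
    (joinSets m n p).card = p.1.card + p.2.card := by
  classical
  rw [← Finset.card_filter_add_card_filter_not (p := fun x : Fin (m+n) => x.1 < m),
    joinSets_filter_lt, joinSets_filter_ge, Finset.card_map, Finset.card_map]

lemma joinSets_bijective (m n : ℕ) : Function.Bijective (joinSets m n) := by
  classical
  rw [Fintype.bijective_iff_injective_and_card]
  constructor
  · intro p q hpq
    have h1 : p.1 = q.1 := by
      apply Finset.map_injective (Fin.castAddEmb n)
      rw [← joinSets_filter_lt m n p, ← joinSets_filter_lt m n q, hpq]
    have h2 : p.2 = q.2 := by
      apply Finset.map_injective (Fin.natAddEmb m)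
      rw [← joinSets_filter_ge m n p, ← joinSets_filter_ge m n q, hpq]
    exact Prod.ext h1 h2
  · simp [Fintype.card_finset, pow_add]

/-- The GBS polynomial of the complete bipartite graph `K_{m,n}`. -/
theorem gbs_completeBipartite (m n : ℕ) :
    GBS (bipAdj m n) =
      ∑ r ∈ Finset.range (min m n + 1),
        Polynomial.C ((-1 : ℝ) ^ r * (m.choose r) * (n.choose r) * ((r.factorial : ℝ)) ^ 2) *
          Polynomial.X ^ (m + n - 2 * r) := by
  classical
  set T : ℕ → Polynomial ℝ := fun c1 =>
    Polynomial.C ((-1:ℝ) ^ c1 * ((c1.factorial : ℝ)) ^ 2) * Polynomial.X ^ (m + n - 2 * c1)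
    with hT
  set G : ℕ → ℕ → Polynomial ℝ := fun c1 c2 => if c1 = c2 then T c1 else 0 with hG
  have hS : ∀ S : Finset (Fin (m + n)),
      Polynomial.C ((-1 : ℝ) ^ (S.card / 2) * (haf (subm (bipAdj m n) S)) ^ 2) *
        Polynomial.X ^ (m + n - S.card)
      = G ((S.filter (fun x => x.1 < m)).card) ((S.filter (fun x => ¬ x.1 < m)).card) := by
    intro S
    have hc : (S.filter (fun x => x.1 < m)).card + (S.filter (fun x => ¬ x.1 < m)).card
        = S.card := Finset.card_filter_add_card_filter_not _
    rw [subm_bipAdj, haf_bpat' _ S.card (by omega)]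
    simp only [hG]
    by_cases hab : (S.filter (fun x => x.1 < m)).card = (S.filter (fun x => ¬ x.1 < m)).card
    · rw [if_pos (by omega), if_pos hab, hT]
      have h1 : S.card / 2 = (S.filter (fun x => x.1 < m)).card := by omega
      have h2 : S.card = 2 * (S.filter (fun x => x.1 < m)).card := by omega
      rw [h1, h2]
    · rw [if_neg (by omega), if_neg hab]
      simp
  rw [GBS, Finset.sum_congr rfl (fun S _ => hS S)]
  rw [← Fintype.sum_bijective (joinSets m n) (joinSets_bijective m n)
      (fun p : Finset (Fin m) × Finset (Fin n) => G p.1.card p.2.card)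
      (fun S => G ((S.filter (fun x => x.1 < m)).card) ((S.filter (fun x => ¬ x.1 < m)).card))
      (fun p => by rw [joinSets_filter_lt, joinSets_filter_ge, Finset.card_map, Finset.card_map])]
  rw [Fintype.sum_prod_type]
  have hsum2 : ∀ c1 : ℕ, (∑ s2 : Finset (Fin n), G c1 s2.card)
      = ∑ b ∈ Finset.range (n + 1), (n.choose b) • G c1 b := by
    intro c1
    rw [← Finset.powerset_univ, Finset.sum_powerset]
    rw [Finset.sum_congr rfl (fun j _ => Finset.sum_powersetCard j univ (fun k => G c1 k))]
    simp only [Finset.card_univ, Fintype.card_fin]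
  rw [Finset.sum_congr rfl (fun s1 (_ : s1 ∈ univ) => hsum2 s1.card)]
  have hsum1 : (∑ s1 : Finset (Fin m), ∑ b ∈ Finset.range (n + 1), (n.choose b) • G s1.card b)
      = ∑ a ∈ Finset.range (m + 1), (m.choose a) •
          ∑ b ∈ Finset.range (n + 1), (n.choose b) • G a b := by
    rw [← Finset.powerset_univ, Finset.sum_powerset]
    rw [Finset.sum_congr rfl (fun j _ => Finset.sum_powersetCard j univ
      (fun k => ∑ b ∈ Finset.range (n + 1), (n.choose b) • G k b))]
    simp only [Finset.card_univ, Fintype.card_fin]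
  rw [hsum1]
  have hinner : ∀ a : ℕ, (∑ b ∈ Finset.range (n + 1), (n.choose b) • G a b)
      = if a ∈ Finset.range (n + 1) then (n.choose a) • T a else 0 := by
    intro a
    rw [← Finset.sum_ite_eq (Finset.range (n + 1)) a (fun b => (n.choose b) • T b)]
    apply Finset.sum_congr rfl
    intro b _
    simp only [hG]
    rw [smul_ite, smul_zero]
    by_cases hab : a = b
    · subst hab; rfl
    · rw [if_neg hab, if_neg hab]
  rw [Finset.sum_congr rfl (fun a _ => by rw [hinner a])]
  rw [← Finset.sum_subset (s₁ := Finset.range (min m n + 1)) (s₂ := Finset.range (m + 1))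
      (by intro x hx; simp only [Finset.mem_range] at *; omega)
      (by
        intro x hx hnx
        simp only [Finset.mem_range] at hx hnx
        rw [if_neg (by simp only [Finset.mem_range]; omega), smul_zero])]
  apply Finset.sum_congr rfl
  intro r hr
  simp only [Finset.mem_range] at hr
  rw [if_pos (by simp only [Finset.mem_range]; omega)]
  rw [smul_smul, hT]
  simp only
  rw [nsmul_eq_mul, ← Polynomial.C_eq_natCast, ← mul_assoc, ← Polynomial.C_mul]
  congr 2
  push_cast
  ring
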